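/- Let V be a 6-dimensional F-vector space (char F ≠ 2,3) with non-degenerate Ω ∈ Λ²V*. Define I₁: Λ³V* → F by I₁(θ) = -2·3²·c₄(θ), where c₄(θ) is the coefficient of x⁴ in the characteristic polynomial of L_θ = i_{v_θ}J^θ. Then I₁ is Sp(Ω)-invariant: I₁(A·θ) = I₁(θ) for all A ∈ Sp(Ω) and θ ∈ Λ³V*. -/
import Mathlib

open scoped TensorProduct

/-- The wedge product of two alternating forms. -/
noncomputable def wedgeForm {F V : Type*} [CommRing F] [AddCommGroup V] [Module F V]
    {m n : ℕ} (ω : V [⋀^Fin m]→ₗ[F] F) (η : V [⋀^Fin n]→ₗ[F] F) :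
    V [⋀^Fin (m + n)]→ₗ[F] F :=
  ((TensorProduct.lid F F).toLinearMap.compAlternatingMap
    (ω.domCoprod η)).domDomCongr finSumFinEquiv

section helpers
variable {F V : Type*} [Field F] [AddCommGroup V] [Module F V]

omit [AddCommGroup V] in
theorem eta2 (g : Fin 2 → V) : g = ![g 0, g 1] := by
  funext i; fin_cases i <;> rfl

omit [AddCommGroup V] in
theorem eta3 (g : Fin 3 → V) : g = ![g 0, g 1, g 2] := by
  funext i; fin_cases i <;> rfl

open Equiv in
theorem wedge_eval {m n : ℕ} (ω : V [⋀^Fin m]→ₗ[F] F) (η : V [⋀^Fin n]→ₗ[F] F)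
    (x : Fin (m + n) → V) :
    (m.factorial * n.factorial) • wedgeForm ω η x
      = ∑ σ : Equiv.Perm (Fin m ⊕ Fin n), (Equiv.Perm.sign σ : ℤ) •
          (ω (fun i => x (finSumFinEquiv (σ (Sum.inl i))))
            * η (fun i => x (finSumFinEquiv (σ (Sum.inr i))))) := by
  have h0 : wedgeForm ω η x
      = TensorProduct.lid F F ((ω.domCoprod η) (fun i => x (finSumFinEquiv i))) := rfl
  have h1 : (m.factorial * n.factorial) • (ω.domCoprod η)
      = MultilinearMap.alternatization
          (MultilinearMap.domCoprod (ω : MultilinearMap F (fun _ : Fin m => V) F)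
            (η : MultilinearMap F (fun _ : Fin n => V) F)) := by
    rw [MultilinearMap.domCoprod_alternization_eq]
    simp [Fintype.card_fin]
  have h2 : (m.factorial * n.factorial) • wedgeForm ω η x
      = TensorProduct.lid F F
          (((m.factorial * n.factorial) • (ω.domCoprod η)) (fun i => x (finSumFinEquiv i))) := by
    rw [h0, AlternatingMap.smul_apply, map_nsmul]
  rw [h2, h1, MultilinearMap.alternatization_apply, map_sum]
  refine Finset.sum_congr rfl fun σ _ => ?_
  rw [MultilinearMap.domDomCongr_apply, MultilinearMap.domCoprod_apply]
  rw [Units.smul_def, map_zsmul]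
  congr 1

theorem wedge_comp {m n : ℕ} (ω : V [⋀^Fin m]→ₗ[F] F) (η : V [⋀^Fin n]→ₗ[F] F)
    (g : V →ₗ[F] V) :
    (wedgeForm ω η).compLinearMap g
      = wedgeForm (ω.compLinearMap g) (η.compLinearMap g) := by
  ext x
  show TensorProduct.lid F F ((ω.domCoprod η) (fun i => g (x (finSumFinEquiv i))))
    = TensorProduct.lid F F
        (((ω.compLinearMap g).domCoprod (η.compLinearMap g)) (fun i => x (finSumFinEquiv i)))
  congr 1
  rw [AlternatingMap.domCoprod_apply, AlternatingMap.domCoprod_apply]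
  rw [MultilinearMap.sum_apply, MultilinearMap.sum_apply]
  refine Finset.sum_congr rfl fun σ _ => ?_
  refine Quotient.inductionOn' σ fun σ => ?_
  rfl

end helpers
open Equiv Equiv.Perm

section perm_sums
variable {M : Type*} [AddCommMonoid M]

theorem perm_sum_1 (g : Equiv.Perm (Fin 1) → M) :
    ∑ π : Equiv.Perm (Fin 1), g π = g 1 := by
  rw [Fintype.sum_subsingleton (f := g) 1]

theorem perm_sum_2 (g : Equiv.Perm (Fin 2) → M) :
    ∑ π : Equiv.Perm (Fin 2), g π
      = ∑ i1 : Fin 2, g (decomposeFin.symm (i1, 1)) := by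
  rw [← Equiv.sum_comp (Equiv.Perm.decomposeFin (n := 1)).symm g, Fintype.sum_prod_type]
  exact Finset.sum_congr rfl fun i _ => perm_sum_1 _

theorem perm_sum_3 (g : Equiv.Perm (Fin 3) → M) :
    ∑ π : Equiv.Perm (Fin 3), g π
      = ∑ i1 : Fin 3, ∑ i2 : Fin 2, g (decomposeFin.symm (i1, decomposeFin.symm (i2, 1))) := by
  rw [← Equiv.sum_comp (Equiv.Perm.decomposeFin (n := 2)).symm g, Fintype.sum_prod_type]
  exact Finset.sum_congr rfl fun i _ => perm_sum_2 _

theorem perm_sum_4 (g : Equiv.Perm (Fin 4) → M) :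
    ∑ π : Equiv.Perm (Fin 4), g π
      = ∑ i1 : Fin 4, ∑ i2 : Fin 3, ∑ i3 : Fin 2,
          g (decomposeFin.symm (i1, decomposeFin.symm (i2, decomposeFin.symm (i3, 1)))) := by
  rw [← Equiv.sum_comp (Equiv.Perm.decomposeFin (n := 3)).symm g, Fintype.sum_prod_type]
  exact Finset.sum_congr rfl fun i _ => perm_sum_3 _

end perm_sums

theorem sum4_pairs {M : Type*} [CommRing M] (f : Fin 4 → Fin 4 → M)
    (h10 : f 1 0 = - f 0 1) (h20 : f 2 0 = - f 0 2) (h30 : f 3 0 = - f 0 3)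
    (h21 : f 2 1 = - f 1 2) (h31 : f 3 1 = - f 1 3) (h32 : f 3 2 = - f 2 3) :
    ∑ π : Equiv.Perm (Fin 4), (Equiv.Perm.sign π : ℤ) • (f (π 0) (π 1) * f (π 2) (π 3))
      = 8 * (f 0 1 * f 2 3 - f 0 2 * f 1 3 + f 0 3 * f 1 2) := by
  rw [perm_sum_4]
  simp only [Fin.sum_univ_succ, Finset.univ_unique, Fin.default_eq_zero, Finset.sum_singleton,
    Fin.sum_univ_zero, decomposeFin.symm_sign,
    Equiv.Perm.decomposeFin_symm_apply_zero, Equiv.Perm.decomposeFin_symm_apply_succ,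
    show (1:Fin 4) = Fin.succ 0 from rfl, show (2:Fin 4) = Fin.succ 1 from rfl,
    show (3:Fin 4) = Fin.succ 2 from rfl, show (1:Fin 3) = Fin.succ 0 from rfl,
    show (2:Fin 3) = Fin.succ 1 from rfl, show (1:Fin 2) = Fin.succ 0 from rfl]
  simp [Equiv.swap_apply_def, Fin.succ]
  ring_nf
  simp [h10, h20, h30, h21, h31, h32]
  ring

section omega
variable {F V : Type*} [Field F] [AddCommGroup V] [Module F V] (Ω : V [⋀^Fin 2]→ₗ[F] F)

theorem omega_swap (a b : V) : Ω ![b, a] = - Ω ![a, b] := by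
  have h : ![a, b] ∘ Equiv.swap 0 1 = ![b, a] := by
    funext i; fin_cases i <;> simp
  rw [← h, AlternatingMap.map_swap _ _ (by decide)]

theorem omega_same (a : V) : Ω ![a, a] = 0 :=
  Ω.map_eq_zero_of_eq _ (show ![a,a] 0 = ![a,a] 1 by simp) (by decide)

theorem upd0 (a b z : V) : Function.update ![a, b] 0 z = ![z, b] := by
  funext i; fin_cases i <;> simp
theorem upd1 (a b z : V) : Function.update ![a, b] 1 z = ![a, z] := by
  funext i; fin_cases i <;> simp

/-- The bilinear form associated to `Ω`. -/
noncomputable def Bform : V →ₗ[F] V →ₗ[F] F :=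
  LinearMap.mk₂ F (fun x y => Ω ![x, y])
    (fun x x' y => by
      rw [← upd0 x y (x + x'), AlternatingMap.map_update_add, upd0, upd0])
    (fun c x y => by
      rw [← upd0 x y (c • x), AlternatingMap.map_update_smul, upd0])
    (fun x y y' => by
      rw [← upd1 x y (y + y'), AlternatingMap.map_update_add, upd1, upd1])
    (fun c x y => by
      rw [← upd1 x y (c • y), AlternatingMap.map_update_smul, upd1])

@[simp] theorem Bform_apply (x y : V) : Bform Ω x y = Ω ![x, y] := rfl

theorem G2 (y : Fin 4 → V) :
    (4 : ℕ) • wedgeForm Ω Ω y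
      = 8 * (Ω ![y 0, y 1] * Ω ![y 2, y 3] - Ω ![y 0, y 2] * Ω ![y 1, y 3]
          + Ω ![y 0, y 3] * Ω ![y 1, y 2]) := by
  have h := wedge_eval Ω Ω y
  rw [show (Nat.factorial 2 * Nat.factorial 2) = 4 from rfl] at h
  rw [h, ← Equiv.sum_comp (Equiv.permCongr (finSumFinEquiv (m := 2) (n := 2)).symm)]
  refine Eq.trans (Finset.sum_congr rfl fun π _ => ?_)
    (sum4_pairs (fun i j => Ω ![y i, y j]) (omega_swap Ω _ _) (omega_swap Ω _ _)
      (omega_swap Ω _ _) (omega_swap Ω _ _) (omega_swap Ω _ _) (omega_swap Ω _ _))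
  rw [Equiv.Perm.sign_permCongr]
  congr 1
  have harg : ∀ (s : Fin 2 ⊕ Fin 2),
      finSumFinEquiv ((Equiv.permCongr finSumFinEquiv.symm π) s) = π (finSumFinEquiv s) := by
    intro s; simp [Equiv.permCongr_apply]
  congr 1
  · have : (fun i => y (finSumFinEquiv ((Equiv.permCongr finSumFinEquiv.symm π) (Sum.inl i))))
        = ![y (π 0), y (π 1)] := by
      funext i
      fin_cases i <;> rw [harg] <;> rfl
    rw [this]
  · have : (fun i => y (finSumFinEquiv ((Equiv.permCongr finSumFinEquiv.symm π) (Sum.inr i))))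
        = ![y (π 2), y (π 3)] := by
      funext i
      fin_cases i <;> rw [harg] <;> rfl
    rw [this]

end omega

def Smat : Fin 6 → Fin 6 → ℤ :=
  ![![0,1,0,0,0,0], ![-1,0,0,0,0,0], ![0,0,0,1,0,0],
    ![0,0,-1,0,0,0], ![0,0,0,0,0,1], ![0,0,0,0,-1,0]]

def gInt (σ : Equiv.Perm (Fin 6)) : ℤ :=
  (Equiv.Perm.sign σ : ℤ) *
    (8 * (Smat (σ 0) (σ 1) * Smat (σ 2) (σ 3) - Smat (σ 0) (σ 2) * Smat (σ 1) (σ 3)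
      + Smat (σ 0) (σ 3) * Smat (σ 1) (σ 2))) * Smat (σ 4) (σ 5)

set_option maxRecDepth 10000 in
set_option maxHeartbeats 4000000 in
theorem gInt_sum : ∑ σ : Equiv.Perm (Fin 6), gInt σ = 1152 := by
  rw [← Equiv.sum_comp (Equiv.Perm.decomposeFin (n := 5)).symm, Fintype.sum_prod_type]
  simp_rw [← Equiv.sum_comp (Equiv.Perm.decomposeFin (n := 4)).symm, Fintype.sum_prod_type]
  simp_rw [← Equiv.sum_comp (Equiv.Perm.decomposeFin (n := 3)).symm, Fintype.sum_prod_type]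
  simp_rw [← Equiv.sum_comp (Equiv.Perm.decomposeFin (n := 2)).symm, Fintype.sum_prod_type]
  simp_rw [← Equiv.sum_comp (Equiv.Perm.decomposeFin (n := 1)).symm, Fintype.sum_prod_type]
  decide

section eval
variable {F V : Type*} [Field F] [AddCommGroup V] [Module F V] (Ω : V [⋀^Fin 2]→ₗ[F] F)

theorem omega3_eval (x : Fin 6 → V)
    (gram : ∀ i j, Ω ![x i, x j] = ((Smat i j : ℤ) : F)) :
    (192 : ℕ) • wedgeForm (wedgeForm Ω Ω) Ω x = ((1152 : ℤ) : F) := by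
  have h := wedge_eval (wedgeForm Ω Ω) Ω x
  rw [show (Nat.factorial 4 * Nat.factorial 2) = 48 from rfl] at h
  have h2 : (192 : ℕ) • wedgeForm (wedgeForm Ω Ω) Ω x
      = 4 • ((48 : ℕ) • wedgeForm (wedgeForm Ω Ω) Ω x) := by
    rw [show (192 : ℕ) = 4 * 48 from rfl, mul_smul]
  rw [h2, h, Finset.smul_sum]
  have key : ∀ σ : Equiv.Perm (Fin 4 ⊕ Fin 2),
      (4 : ℕ) • ((Equiv.Perm.sign σ : ℤ) •
        ((wedgeForm Ω Ω) (fun i => x (finSumFinEquiv (σ (Sum.inl i))))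
          * Ω (fun i => x (finSumFinEquiv (σ (Sum.inr i))))))
      = ((gInt (Equiv.permCongr finSumFinEquiv σ) : ℤ) : F) := by
    intro σ
    rw [smul_comm, ← smul_mul_assoc, G2 Ω (fun i => x (finSumFinEquiv (σ (Sum.inl i))))]
    rw [eta2 (fun i => x (finSumFinEquiv (σ (Sum.inr i))))]
    unfold gInt
    rw [Equiv.Perm.sign_permCongr]
    have hp : ∀ j : Fin 6, (Equiv.permCongr finSumFinEquiv σ) j
        = finSumFinEquiv (σ (finSumFinEquiv.symm j)) := fun j => rfl
    simp only [hp,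
      show (finSumFinEquiv (m := 4) (n := 2)).symm (0 : Fin 6) = Sum.inl 0 by decide,
      show (finSumFinEquiv (m := 4) (n := 2)).symm (1 : Fin 6) = Sum.inl 1 by decide,
      show (finSumFinEquiv (m := 4) (n := 2)).symm (2 : Fin 6) = Sum.inl 2 by decide,
      show (finSumFinEquiv (m := 4) (n := 2)).symm (3 : Fin 6) = Sum.inl 3 by decide,
      show (finSumFinEquiv (m := 4) (n := 2)).symm (4 : Fin 6) = Sum.inr 0 by decide,
      show (finSumFinEquiv (m := 4) (n := 2)).symm (5 : Fin 6) = Sum.inr 1 by decide]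
    rw [gram, gram, gram, gram, gram, gram, gram, zsmul_eq_mul]
    push_cast
    ring
  rw [Finset.sum_congr rfl (fun σ _ => key σ), ← Int.cast_sum,
    Equiv.sum_comp (Equiv.permCongr (finSumFinEquiv (m := 4) (n := 2))) gInt, gInt_sum]

end eval

section inj
variable {F V : Type*} [Field F] [AddCommGroup V] [Module F V] [FiniteDimensional F V]

set_option maxRecDepth 8000 in
theorem curry_inj (hdim : Module.finrank F V = 6) (hc2 : (2:F) ≠ 0) (hc3 : (3:F) ≠ 0)
    (Ω : V [⋀^Fin 2]→ₗ[F] F)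
    (hΩ : ∀ x : V, (∀ y : V, Ω ![x, y] = 0) → x = 0)
    (w : V) (hw : (wedgeForm (wedgeForm Ω Ω) Ω).curryLeft w = 0) : w = 0 := by
  by_contra hw0
  set B : V →ₗ[F] V →ₗ[F] F := Bform Ω with hB
  have hBapp : ∀ a b : V, B a b = Ω ![a, b] := fun a b => rfl
  have hBne : ∀ z : V, z ≠ 0 → ∃ y, B z y ≠ 0 := by
    intro z hz
    by_contra h
    push_neg at h
    exact hz (hΩ z h)
  have hskew : ∀ a b : V, B b a = - B a b := fun a b => omega_swap Ω a b
  have hdiag : ∀ a : V, B a a = 0 := fun a => omega_same Ω a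
  -- step 1
  obtain ⟨u1, hu1⟩ := hBne w hw0
  set f1 : V := (B w u1)⁻¹ • u1 with hf1
  have hwf1 : B w f1 = 1 := by
    rw [hf1, map_smul, smul_eq_mul, inv_mul_cancel₀ hu1]
  have hf1w : B f1 w = -1 := by rw [hskew, hwf1]
  -- the orthogonal complement of ⟨w, f1⟩
  set φ1 : V →ₗ[F] F × F := (B w).prod (B f1) with hφ1
  set U : Submodule F V := LinearMap.ker φ1 with hU
  have hUmem : ∀ z : V, z ∈ U ↔ B w z = 0 ∧ B f1 z = 0 := by
    intro z
    constructor
    · intro hz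
      have := LinearMap.mem_ker.mp hz
      exact ⟨congrArg Prod.fst this, congrArg Prod.snd this⟩
    · intro ⟨h1, h2⟩
      exact LinearMap.mem_ker.mpr (Prod.ext h1 h2)
  have hU4 : 4 ≤ Module.finrank F U := by
    have h1 := LinearMap.finrank_range_add_finrank_ker φ1
    have h2 : Module.finrank F (LinearMap.range φ1) ≤ 2 := by
      have := Submodule.finrank_le (LinearMap.range φ1)
      simpa [Module.finrank_prod] using this
    rw [hdim] at h1
    rw [hU]
    omega
  have hUne : U ≠ ⊥ := by
    intro hbot
    rw [hbot, finrank_bot] at hU4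
    omega
  obtain ⟨e2, he2U, he2⟩ := Submodule.exists_mem_ne_zero_of_ne_bot hUne
  have he2w : B w e2 = 0 := ((hUmem e2).mp he2U).1
  have he2f1 : B f1 e2 = 0 := ((hUmem e2).mp he2U).2
  obtain ⟨u2, hu2⟩ := hBne e2 he2
  -- projection into U
  set π1 : V → V := fun z => z - (B w z) • f1 + (B f1 z) • w with hπ1
  have hπ1U : ∀ z : V, π1 z ∈ U := by
    intro z
    rw [hUmem]
    constructor
    · simp [hπ1, map_sub, map_add, map_smul, smul_eq_mul, hwf1, hdiag]
    · simp [hπ1, map_sub, map_add, map_smul, smul_eq_mul, hf1w, hdiag]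
  have hπ1B : ∀ (z z' : V), B w z' = 0 → B f1 z' = 0 → B z' (π1 z) = B z' z := by
    intro z z' h1 h2
    have hf : B z' f1 = 0 := by rw [hskew f1 z', h2, neg_zero]
    have hww : B z' w = 0 := by rw [hskew w z', h1, neg_zero]
    simp [hπ1, map_sub, map_add, map_smul, smul_eq_mul, hf, hww]
  set f2p : V := π1 u2 with hf2p
  have hbe2f2p : B e2 f2p = B e2 u2 := hπ1B u2 e2 he2w he2f1
  set f2 : V := (B e2 f2p)⁻¹ • f2p with hf2
  have he2f2 : B e2 f2 = 1 := by
    rw [hf2, map_smul, smul_eq_mul, inv_mul_cancel₀ (by rw [hbe2f2p]; exact hu2)]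
  have hf2e2 : B f2 e2 = -1 := by rw [hskew, he2f2]
  have hf2U : f2 ∈ U := by
    rw [hf2]
    exact Submodule.smul_mem U _ (hπ1U u2)
  have hf2w : B w f2 = 0 := ((hUmem f2).mp hf2U).1
  have hf2f1 : B f1 f2 = 0 := ((hUmem f2).mp hf2U).2
  -- second orthogonal complement
  set φ2 : V →ₗ[F] (F × F) × (F × F) := ((B w).prod (B f1)).prod ((B e2).prod (B f2)) with hφ2
  set U2 : Submodule F V := LinearMap.ker φ2 with hU2
  have hU2mem : ∀ z : V, z ∈ U2 ↔ B w z = 0 ∧ B f1 z = 0 ∧ B e2 z = 0 ∧ B f2 z = 0 := by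
    intro z
    constructor
    · intro hz
      have h := LinearMap.mem_ker.mp hz
      exact ⟨congrArg (fun p => p.1.1) h, congrArg (fun p => p.1.2) h,
        congrArg (fun p => p.2.1) h, congrArg (fun p => p.2.2) h⟩
    · intro ⟨h1, h2, h3, h4⟩
      refine LinearMap.mem_ker.mpr (Prod.ext (Prod.ext ?_ ?_) (Prod.ext ?_ ?_)) <;> assumption
  have hU22 : 2 ≤ Module.finrank F U2 := by
    have h1 := LinearMap.finrank_range_add_finrank_ker φ2
    have h2 : Module.finrank F (LinearMap.range φ2) ≤ 4 := by
      have := Submodule.finrank_le (LinearMap.range φ2)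
      simpa [Module.finrank_prod] using this
    rw [hdim] at h1
    rw [hU2]
    omega
  have hU2ne : U2 ≠ ⊥ := by
    intro hbot
    rw [hbot, finrank_bot] at hU22
    omega
  obtain ⟨e3, he3U2, he3⟩ := Submodule.exists_mem_ne_zero_of_ne_bot hU2ne
  obtain ⟨he3w, he3f1, he3e2, he3f2⟩ := (hU2mem e3).mp he3U2
  obtain ⟨u3, hu3⟩ := hBne e3 he3
  set π2 : V → V := fun z => z - (B e2 z) • f2 + (B f2 z) • e2 with hπ2
  set f3p : V := π2 (π1 u3) with hf3p
  have hπ2B : ∀ (z z' : V), B e2 z' = 0 → B f2 z' = 0 → B z' (π2 z) = B z' z := by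
    intro z z' h1 h2
    have ha : B z' f2 = 0 := by rw [hskew f2 z', h2, neg_zero]
    have hb : B z' e2 = 0 := by rw [hskew e2 z', h1, neg_zero]
    simp [hπ2, map_sub, map_add, map_smul, smul_eq_mul, ha, hb]
  have hbe3f3p : B e3 f3p = B e3 u3 := by
    rw [hf3p, hπ2B _ _ he3e2 he3f2, hπ1B _ _ he3w he3f1]
  have he2w' : B e2 w = 0 := by rw [hskew w e2, he2w, neg_zero]
  have hf2w' : B f2 w = 0 := by rw [hskew w f2, hf2w, neg_zero]
  have he2f1' : B e2 f1 = 0 := by rw [hskew f1 e2, he2f1, neg_zero]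
  have hf2f1' : B f2 f1 = 0 := by rw [hskew f1 f2, hf2f1, neg_zero]
  have hπ2e2 : ∀ z : V, B e2 (π2 z) = 0 := by
    intro z
    simp [hπ2, map_sub, map_add, map_smul, smul_eq_mul, he2f2, hdiag]
  have hπ2f2 : ∀ z : V, B f2 (π2 z) = 0 := by
    intro z
    simp [hπ2, map_sub, map_add, map_smul, smul_eq_mul, hf2e2, hdiag]
  have hf3pU2 : f3p ∈ U2 := by
    rw [hU2mem]
    have hU1 : π1 u3 ∈ U := hπ1U u3
    have hα := ((hUmem _).mp hU1).1
    have hβ := ((hUmem _).mp hU1).2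
    refine ⟨?_, ?_, hπ2e2 _, hπ2f2 _⟩
    · rw [hf3p, hπ2B _ _ he2w' hf2w', hα]
    · rw [hf3p, hπ2B _ _ he2f1' hf2f1', hβ]
  set f3 : V := (B e3 f3p)⁻¹ • f3p with hf3
  have he3f3 : B e3 f3 = 1 := by
    rw [hf3, map_smul, smul_eq_mul, inv_mul_cancel₀ (by rw [hbe3f3p]; exact hu3)]
  have hf3U2 : f3 ∈ U2 := by
    rw [hf3]
    exact Submodule.smul_mem U2 _ hf3pU2
  obtain ⟨hf3w, hf3f1, hf3e2, hf3f2⟩ := (hU2mem f3).mp hf3U2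
  -- the symplectic tuple
  set x : Fin 6 → V := ![w, f1, e2, f2, e3, f3] with hx
  have hf1w' : B f1 w = -1 := hf1w
  have he3w' : B e3 w = 0 := by rw [hskew w e3, he3w, neg_zero]
  have hf3w' : B f3 w = 0 := by rw [hskew w f3, hf3w, neg_zero]
  have he3f1' : B e3 f1 = 0 := by rw [hskew f1 e3, he3f1, neg_zero]
  have hf3f1' : B f3 f1 = 0 := by rw [hskew f1 f3, hf3f1, neg_zero]
  have he3e2' : B e3 e2 = 0 := by rw [hskew e2 e3, he3e2, neg_zero]
  have hf3e2' : B f3 e2 = 0 := by rw [hskew e2 f3, hf3e2, neg_zero]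
  have he3f2' : B e3 f2 = 0 := by rw [hskew f2 e3, he3f2, neg_zero]
  have hf3f2' : B f3 f2 = 0 := by rw [hskew f2 f3, hf3f2, neg_zero]
  have hf3e3 : B f3 e3 = -1 := by rw [hskew e3 f3, he3f3]
  have gram : ∀ i j : Fin 6, Ω ![x i, x j] = ((Smat i j : ℤ) : F) := by
    intro i j
    have hB' : ∀ a b : V, Ω ![a, b] = B a b := fun a b => rfl
    fin_cases i <;> fin_cases j <;>
      norm_num [hx, Smat, hB', hwf1, hf1w', he2w, he2w', he2f1, he2f1', hf2w, hf2w',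
        hf2f1, hf2f1', he2f2, hf2e2, he3w, he3w', he3f1, he3f1', he3e2, he3e2',
        he3f2, he3f2', hf3w, hf3w', hf3f1, hf3f1', hf3e2, hf3e2', hf3f2, hf3f2',
        he3f3, hf3e3, hdiag]
  have h6 := omega3_eval Ω x gram
  have hx0 : wedgeForm (wedgeForm Ω Ω) Ω x = 0 := by
    have hxc : x = Matrix.vecCons w ![f1, e2, f2, e3, f3] := rfl
    rw [hxc, show (wedgeForm (wedgeForm Ω Ω) Ω) (Matrix.vecCons w ![f1, e2, f2, e3, f3])
      = ((wedgeForm (wedgeForm Ω Ω) Ω).curryLeft w) ![f1, e2, f2, e3, f3] from rfl, hw]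
    rfl
  rw [hx0, smul_zero] at h6
  have h1152 : ((1152 : ℤ) : F) ≠ 0 := by
    have hp2 : (2 : F) ^ 7 ≠ 0 := pow_ne_zero _ hc2
    have hp3 : (3 : F) ^ 2 ≠ 0 := pow_ne_zero _ hc3
    have := mul_ne_zero hp2 hp3
    norm_num at this ⊢
    exact this
  exact h1152 h6.symm

end inj

/-- `I₁(θ) = -2·3²·c₄(θ)` is `Sp(Ω)`-invariant. -/
theorem stmt_12 (F V : Type*) [Field F] [AddCommGroup V] [Module F V]
    [FiniteDimensional F V] (hdim : Module.finrank F V = 6)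
    (hchar2 : (2 : F) ≠ 0) (hchar3 : (3 : F) ≠ 0)
    (Ω : V [⋀^Fin 2]→ₗ[F] F)
    (hΩ : ∀ x : V, (∀ y : V, Ω ![x, y] = 0) → x = 0)
    (A : V ≃ₗ[F] V) (hA : ∀ x y : V, Ω ![A x, A y] = Ω ![x, y])
    (θ θ' : V [⋀^Fin 3]→ₗ[F] F)
    (hθ' : ∀ x y z : V, θ' ![x, y, z] = θ ![A.symm x, A.symm y, A.symm z])
    (J J' : V [⋀^Fin 2]→ₗ[F] V)
    (hJ : ∀ x y z : V, θ ![x, y, z] = Ω ![J ![x, y], z])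
    (hJ' : ∀ x y z : V, θ' ![x, y, z] = Ω ![J' ![x, y], z])
    (v v' : V)
    (hv : (wedgeForm (wedgeForm Ω Ω) Ω : V [⋀^Fin 6]→ₗ[F] F).curryLeft v
        = (wedgeForm θ Ω : V [⋀^Fin 5]→ₗ[F] F))
    (hv' : (wedgeForm (wedgeForm Ω Ω) Ω : V [⋀^Fin 6]→ₗ[F] F).curryLeft v'
        = (wedgeForm θ' Ω : V [⋀^Fin 5]→ₗ[F] F))
    (L L' : V →ₗ[F] V)
    (hL : ∀ y : V, L y = J ![v, y]) (hL' : ∀ y : V, L' y = J' ![v', y]) :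
    -(2 * 3 ^ 2 : F) * L'.charpoly.coeff 4
      = -(2 * 3 ^ 2 : F) * L.charpoly.coeff 4 := by
  classical
  -- invariance of the forms under A
  have hΩA : Ω.compLinearMap (A : V →ₗ[F] V) = Ω := by
    refine AlternatingMap.ext fun y => ?_
    rw [AlternatingMap.compLinearMap_apply]
    rw [eta2 (fun i => (A : V →ₗ[F] V) (y i)), eta2 y]
    exact hA (y 0) (y 1)
  have hθ'A : θ'.compLinearMap (A : V →ₗ[F] V) = θ := by
    refine AlternatingMap.ext fun y => ?_
    rw [AlternatingMap.compLinearMap_apply]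
    rw [eta3 (fun i => (A : V →ₗ[F] V) (y i)), eta3 y]
    show θ' ![A (y 0), A (y 1), A (y 2)] = θ ![y 0, y 1, y 2]
    rw [hθ' (A (y 0)) (A (y 1)) (A (y 2)), A.symm_apply_apply, A.symm_apply_apply,
      A.symm_apply_apply]
  have hΦA : (wedgeForm (wedgeForm Ω Ω) Ω).compLinearMap (A : V →ₗ[F] V)
      = wedgeForm (wedgeForm Ω Ω) Ω := by
    rw [wedge_comp, wedge_comp, hΩA]
  have h5A : (wedgeForm θ' Ω).compLinearMap (A : V →ₗ[F] V) = wedgeForm θ Ω := by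
    rw [wedge_comp, hθ'A, hΩA]
  -- v' = A v
  have hcurry : (wedgeForm (wedgeForm Ω Ω) Ω : V [⋀^Fin 6]→ₗ[F] F).curryLeft v'
      = (wedgeForm (wedgeForm Ω Ω) Ω : V [⋀^Fin 6]→ₗ[F] F).curryLeft (A v) := by
    rw [hv']
    refine AlternatingMap.ext fun y => ?_
    set z : Fin 5 → V := fun i => A.symm (y i) with hz
    have hy : y = fun i => (A : V →ₗ[F] V) (z i) := by
      funext i
      simp [hz]
    have lhs : (wedgeForm θ' Ω) y = (wedgeForm θ Ω) z := by
      rw [hy, ← AlternatingMap.compLinearMap_apply, h5A]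
    have hcons : Matrix.vecCons (A v) y = fun i => (A : V →ₗ[F] V) (Matrix.vecCons v z i) := by
      funext i
      refine Fin.cases ?_ (fun k => ?_) i
      · rfl
      · simp [hy]
    have rhs : ((wedgeForm (wedgeForm Ω Ω) Ω).curryLeft (A v)) y
        = (wedgeForm (wedgeForm Ω Ω) Ω) (Matrix.vecCons v z) := by
      rw [AlternatingMap.curryLeft_apply_apply, hcons,
        ← AlternatingMap.compLinearMap_apply, hΦA]
    rw [lhs, rhs, ← AlternatingMap.curryLeft_apply_apply, hv]
  have hveq : v' = A v := by
    have hsub : (wedgeForm (wedgeForm Ω Ω) Ω : V [⋀^Fin 6]→ₗ[F] F).curryLeft (v' - A v) = 0 := by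
      rw [map_sub, hcurry, sub_self]
    have := curry_inj hdim hchar2 hchar3 Ω hΩ (v' - A v) hsub
    rwa [sub_eq_zero] at this
  -- transfer of J
  have hJtrans : ∀ p q : V, J' ![p, q] = A (J ![A.symm p, A.symm q]) := by
    intro p q
    have key : ∀ z : V, Ω ![J' ![p, q] - A (J ![A.symm p, A.symm q]), z] = 0 := by
      intro z
      have h1 : Ω ![J' ![p, q], z] = Ω ![A (J ![A.symm p, A.symm q]), z] := by
        rw [← hJ' p q z, hθ' p q z, hJ _ _ _]
        have := hA (J ![A.symm p, A.symm q]) (A.symm z)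
        rw [A.apply_symm_apply] at this
        rw [← this]
      have hlin : Ω ![J' ![p, q] - A (J ![A.symm p, A.symm q]), z]
          = Ω ![J' ![p, q], z] - Ω ![A (J ![A.symm p, A.symm q]), z] := by
        show Bform Ω (J' ![p, q] - A (J ![A.symm p, A.symm q])) z = _
        rw [map_sub]
        rfl
      rw [hlin, h1, sub_self]
    have := hΩ _ key
    rwa [sub_eq_zero] at this
  -- L' is the conjugate of L
  have hLconj : L' = A.conj L := by
    refine LinearMap.ext fun y => ?_
    rw [hL' y, hJtrans v' y, hveq, A.symm_apply_apply, ← hL (A.symm y)]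
    rfl
  rw [hLconj, LinearEquiv.charpoly_conj A L]
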